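/- (Sixth-order superconvergence of the a-energy, abstract form.) In the abstract LOD setting, let f ∈ H, let u ∈ H satisfy a(u,v) = ⟨f,v⟩ for all v ∈ H, and let u_LOD ∈ V_LOD satisfy a(u_LOD, v) = a(u, v) for all v ∈ V_LOD together with u − u_LOD ∈ W. Then a(u,u) − a(u_LOD, u_LOD) = ⟨f − Pf, u − u_LOD⟩, and hence |a(u,u) − a(u_LOD, u_LOD)| ≤ ‖f − Pf‖ · ‖u − u_LOD‖; in particular, if ‖f − Pf‖ ≤ C₂ H² and ‖u − u_LOD‖ ≤ C₃ H⁴, then |a(u,u) − a(u_LOD,u_LOD)| ≤ C₂ C₃ H⁶. -/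

import Mathlib

/-!
Galerkin orthogonality in the form `a(u_LOD, u - u_LOD) = 0` gives
`a(u,u) - a(u_LOD,u_LOD) = a(u, u - u_LOD) = ⟨f, u - u_LOD⟩`. Since `u - u_LOD ∈ ker P` and `P`
is `⟨·,·⟩`-self-adjoint, `⟨Pf, u - u_LOD⟩ = ⟨f, P(u - u_LOD)⟩ = 0`, so `f` may be replaced by
`f - Pf`; Cauchy–Schwarz then multiplies the two convergence rates.
-/

open scoped ComplexConjugate

section SemiInnerProduct

variable {𝕜 E : Type*} [RCLike 𝕜] [AddCommGroup E] {s : E → E → 𝕜}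

theorem add_right_of_add_left_of_conj_symm (add_left : ∀ x y z, s (x + y) z = s x z + s y z)
    (conj_symm : ∀ x y, s y x = conj (s x y)) (x y z : E) : s x (y + z) = s x y + s x z := by
  rw [conj_symm, add_left, map_add, ← conj_symm, ← conj_symm]

theorem sub_left_of_add_left (add_left : ∀ x y z, s (x + y) z = s x z + s y z) (x y z : E) :
    s (x - y) z = s x z - s y z := by
  rw [eq_sub_iff_add_eq, ← add_left, sub_add_cancel]

theorem sub_right_of_add_left_of_conj_symm (add_left : ∀ x y z, s (x + y) z = s x z + s y z)
    (conj_symm : ∀ x y, s y x = conj (s x y)) (x y z : E) : s x (y - z) = s x y - s x z := by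
  rw [eq_sub_iff_add_eq, ← add_right_of_add_left_of_conj_symm add_left conj_symm, sub_add_cancel]

-- Mathlib's inner products are linear in the second argument, hence `inner x y := s y x`.
abbrev PreInnerProductSpace.Core.ofLinearLeft [Module 𝕜 E] (s : E → E → 𝕜)
    (add_left : ∀ x y z, s (x + y) z = s x z + s y z)
    (smul_left : ∀ (c : 𝕜) x y, s (c • x) y = c * s x y)
    (conj_symm : ∀ x y, s y x = conj (s x y)) (re_nonneg : ∀ x, 0 ≤ RCLike.re (s x x)) :
    PreInnerProductSpace.Core 𝕜 E where
  inner x y := s y x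
  conj_inner_symm x y := (conj_symm x y).symm
  re_inner_nonneg := re_nonneg
  add_left x y z := add_right_of_add_left_of_conj_symm add_left conj_symm z x y
  smul_left x y c := by
    rw [conj_symm, smul_left, map_mul, ← conj_symm]

theorem norm_le_sqrt_re_mul_sqrt_re_of_linear_left [Module 𝕜 E]
    (add_left : ∀ x y z, s (x + y) z = s x z + s y z)
    (smul_left : ∀ (c : 𝕜) x y, s (c • x) y = c * s x y)
    (conj_symm : ∀ x y, s y x = conj (s x y)) (re_nonneg : ∀ x, 0 ≤ RCLike.re (s x x))
    (x y : E) : ‖s x y‖ ≤ √(RCLike.re (s x x)) * √(RCLike.re (s y y)) :=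
  (InnerProductSpace.Core.norm_inner_le_norm
    (c := .ofLinearLeft s add_left smul_left conj_symm re_nonneg) y x).trans_eq (mul_comm _ _)

theorem apply_self_sub_apply_self_of_apply_sub_eq_zero
    (add_left : ∀ x y z, s (x + y) z = s x z + s y z)
    (conj_symm : ∀ x y, s y x = conj (s x y)) {u v : E} (h : s v (u - v) = 0) :
    s u u - s v v = s u (u - v) := by
  have sub_right := sub_right_of_add_left_of_conj_symm add_left conj_symm
  have hvu : s v u = s v v := sub_eq_zero.mp (sub_right v u v ▸ h)
  rw [sub_right, conj_symm v u, hvu, ← conj_symm]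

end SemiInnerProduct

theorem energy_superconvergence_general
    {H : Type*} [NormedAddCommGroup H] [InnerProductSpace ℂ H]
    (inn : H → H → ℂ)
    (inn_add_left : ∀ x y z : H, inn (x + y) z = inn x z + inn y z)
    (inn_smul_left : ∀ (c : ℂ) (x y : H), inn (c • x) y = c * inn x y)
    (inn_conj_symm : ∀ x y : H, inn y x = conj (inn x y))
    (inn_nonneg : ∀ x : H, 0 ≤ (inn x x).re)
    (nl2 : H → ℝ) (hnl2 : ∀ v : H, nl2 v = Real.sqrt (inn v v).re)
    (a : H → H → ℂ)
    (a_add_left : ∀ x y z : H, a (x + y) z = a x z + a y z)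
    (a_hermitian : ∀ x y : H, a y x = conj (a x y))
    (P : H →L[ℂ] H)
    (P_selfadjoint : ∀ x y : H, inn (P x) y = inn x (P y))
    -- data f, exact solution u, Ritz projection uLOD ∈ V_LOD with u − uLOD ∈ W
    (Hm C₂ C₃ : ℝ)
    (f u uLOD : H)
    (hu : ∀ v : H, a u v = inn f v)
    (huLOD_mem : ∀ w : H, P w = 0 → a uLOD w = 0)
    (herr_W : P (u - uLOD) = 0) :
    (a u u - a uLOD uLOD = inn (f - P f) (u - uLOD)) ∧
    (‖a u u - a uLOD uLOD‖ ≤ nl2 (f - P f) * nl2 (u - uLOD)) ∧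
    (nl2 (f - P f) ≤ C₂ * Hm ^ 2 → nl2 (u - uLOD) ≤ C₃ * Hm ^ 4 →
      ‖a u u - a uLOD uLOD‖ ≤ C₂ * C₃ * Hm ^ 6) := by
  have cauchy_schwarz (x y : H) : ‖inn x y‖ ≤ nl2 x * nl2 y := by
    rw [hnl2, hnl2]
    exact norm_le_sqrt_re_mul_sqrt_re_of_linear_left
      inn_add_left inn_smul_left inn_conj_symm inn_nonneg x y
  have inn_P_f : inn (P f) (u - uLOD) = 0 := by
    rw [P_selfadjoint, herr_W, ← sub_self 0,
      sub_right_of_add_left_of_conj_symm inn_add_left inn_conj_symm, sub_self]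
  have energy : a u u - a uLOD uLOD = inn (f - P f) (u - uLOD) := by
    rw [apply_self_sub_apply_self_of_apply_sub_eq_zero a_add_left a_hermitian
      (huLOD_mem _ herr_W), hu, sub_left_of_add_left inn_add_left, inn_P_f, sub_zero]
  have bound : ‖a u u - a uLOD uLOD‖ ≤ nl2 (f - P f) * nl2 (u - uLOD) :=
    energy ▸ cauchy_schwarz _ _
  refine ⟨energy, bound, fun hf he => ?_⟩
  have hnl2_nonneg (v : H) : 0 ≤ nl2 v := hnl2 v ▸ Real.sqrt_nonneg _
  calc ‖a u u - a uLOD uLOD‖ ≤ nl2 (f - P f) * nl2 (u - uLOD) := bound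
    _ ≤ C₂ * Hm ^ 2 * (C₃ * Hm ^ 4) :=
      mul_le_mul hf he (hnl2_nonneg _) ((hnl2_nonneg _).trans hf)
    _ = C₂ * C₃ * Hm ^ 6 := by ring

/-- Sixth-order superconvergence of the a-energy, abstract form:
`a(u,u) − a(u_LOD,u_LOD) = ⟨f − Pf, u − u_LOD⟩` and the resulting `O(H⁶)` bound. -/
theorem energy_superconvergence
    {H : Type*} [NormedAddCommGroup H] [InnerProductSpace ℂ H] [CompleteSpace H]
    (inn : H → H → ℂ)
    (inn_add_left : ∀ x y z : H, inn (x + y) z = inn x z + inn y z)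
    (inn_smul_left : ∀ (c : ℂ) (x y : H), inn (c • x) y = c * inn x y)
    (inn_conj_symm : ∀ x y : H, inn y x = conj (inn x y))
    (inn_nonneg : ∀ x : H, 0 ≤ (inn x x).re)
    (inn_definite : ∀ x : H, inn x x = 0 → x = 0)
    (nl2 : H → ℝ) (hnl2 : ∀ v : H, nl2 v = Real.sqrt (inn v v).re)
    (CF : ℝ) (hCF : 0 < CF) (hFriedrichs : ∀ v : H, nl2 v ≤ CF * ‖v‖)
    (a : H → H → ℂ)
    (a_add_left : ∀ x y z : H, a (x + y) z = a x z + a y z)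
    (a_smul_left : ∀ (c : ℂ) (x y : H), a (c • x) y = c * a x y)
    (a_hermitian : ∀ x y : H, a y x = conj (a x y))
    (Ca : ℝ) (a_bounded : ∀ v w : H, ‖a v w‖ ≤ Ca * ‖v‖ * ‖w‖)
    (α : ℝ) (hα : 0 < α) (a_coercive : ∀ v : H, α * ‖v‖ ^ 2 ≤ (a v v).re)
    (P : H →L[ℂ] H)
    (P_idem : ∀ x : H, P (P x) = P x)
    (P_finite : FiniteDimensional ℂ (LinearMap.range (P : H →ₗ[ℂ] H)))
    (P_selfadjoint : ∀ x y : H, inn (P x) y = inn x (P y))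
    -- data f, exact solution u, Ritz projection uLOD ∈ V_LOD with u − uLOD ∈ W
    (Hm C₂ C₃ : ℝ) (hHm : 0 < Hm) (hC₂ : 0 < C₂) (hC₃ : 0 < C₃)
    (f u uLOD : H)
    (hu : ∀ v : H, a u v = inn f v)
    (huLOD_mem : ∀ w : H, P w = 0 → a uLOD w = 0)
    (huLOD_galerkin : ∀ v : H, (∀ w : H, P w = 0 → a v w = 0) → a uLOD v = a u v)
    (herr_W : P (u - uLOD) = 0) :
    (a u u - a uLOD uLOD = inn (f - P f) (u - uLOD)) ∧
    (‖a u u - a uLOD uLOD‖ ≤ nl2 (f - P f) * nl2 (u - uLOD)) ∧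
    (nl2 (f - P f) ≤ C₂ * Hm ^ 2 → nl2 (u - uLOD) ≤ C₃ * Hm ^ 4 →
      ‖a u u - a uLOD uLOD‖ ≤ C₂ * C₃ * Hm ^ 6) :=
  energy_superconvergence_general inn inn_add_left inn_smul_left inn_conj_symm inn_nonneg nl2 hnl2 a
    a_add_left a_hermitian P P_selfadjoint Hm C₂ C₃ f u uLOD hu huLOD_mem herr_W
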